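/- Let n ≥ 1 be an integer and let κ be a complex number with Re κ > 0. Then ∫_{(0,∞)^n} D_n(y²) · D_n(y) · ∏_{i=1}^n y_i^{κ−1} · e^{−∑_{i=1}^n y_i} dy = n! · 2^{n(n−1)/2} · ∏_{i=0}^{n−1} i! · Γ(κ+2i). -/

import Mathlib

/-!
Up to the sign `(-1)^(n(n-1)/2)`, which occurs in both factors, `D_n(y²) D_n(y)` is the product of
the Vandermonde determinants `det[y_i^(2b)]` and `det[y_i^a]`. Absorbing the weight
`y^(κ-1) e^(-y)` into the second one, Andréief's identity turns the integral into `n!` times the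
determinant of the moment matrix `∫₀^∞ y^(κ-1+a+2b) e^(-y) dy = Γ(κ + 2b + a)`. Pulling
`Γ(κ + 2b)` out of column `b` leaves the rising factorials `(κ + 2b)_a`, monic of degree `a`,
so what remains is the Vandermonde determinant of the points `κ + 2b`, i.e. `2^(n(n-1)/2) ∏ i!`.
-/

open MeasureTheory Finset Matrix Equiv

namespace Matrix

variable {R : Type*} [CommRing R]

theorem sum_perm_sum_perm_sign_mul_prod {ι : Type*} [Fintype ι] [DecidableEq ι]
    (M : Matrix ι ι R) :
    ∑ σ : Perm ι, ∑ τ : Perm ι,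
        ((Perm.sign σ : ℤ) : R) * (Perm.sign τ : ℤ) * ∏ i, M (σ i) (τ i) =
      (Fintype.card ι).factorial * M.det := by
  have inner (σ : Perm ι) : ∑ τ : Perm ι,
      ((Perm.sign σ : ℤ) : R) * (Perm.sign τ : ℤ) * ∏ i, M (σ i) (τ i) = M.det := by
    rw [← det_transpose, det_apply', ← Equiv.sum_comp (Equiv.mulRight σ)]
    refine sum_congr rfl fun ρ _ => ?_
    have hsign : Perm.sign σ * Perm.sign (ρ * σ) = Perm.sign ρ := by
      rw [Perm.sign_mul, mul_comm (Perm.sign ρ), ← mul_assoc, Int.units_mul_self, one_mul]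
    rw [coe_mulRight, ← Int.cast_mul, ← Units.val_mul, hsign,
      ← Equiv.prod_comp σ fun j => Mᵀ (ρ j) j]
    rfl
  simp_rw [inner, sum_const, card_univ, Fintype.card_perm, nsmul_eq_mul]

theorem det_vandermonde_mul (d : R) {n : ℕ} (v : Fin n → R) :
    (vandermonde fun i => d * v i).det = d ^ n.choose 2 * (vandermonde v).det := by
  have hpairs : ∑ i : Fin n, #(Ioi i) = n.choose 2 := by
    simp_rw [Fin.card_Ioi]
    rw [Fin.sum_univ_eq_sum_range (fun i => n - 1 - i), sum_range_reflect (fun i => i),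
      sum_range_id, Nat.choose_two_right]
  simp_rw [det_vandermonde, ← mul_sub, prod_mul_distrib, prod_const, prod_pow_eq_pow_sum, hpairs]

theorem det_vandermonde_natCast (n : ℕ) :
    (vandermonde fun i : Fin n => (i : R)).det = ∏ i ∈ range n, (i.factorial : R) := by
  cases n with
  | zero => simp
  | succ n =>
    rw [det_vandermonde_id_eq_superFactorial, ← Nat.prod_range_succ_factorial]
    push_cast
    rfl

theorem det_vandermonde_mul_det_vandermonde {n : ℕ} (u v : Fin n → R) :
    (vandermonde u).det * (vandermonde v).det =
      (∏ i : Fin n, ∏ j ∈ Ioi i, (u i - u j)) * ∏ i : Fin n, ∏ j ∈ Ioi i, (v i - v j) := by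
  simp_rw [det_vandermonde, ← prod_mul_distrib]
  exact prod_congr rfl fun i _ => prod_congr rfl fun j _ => by ring

end Matrix

namespace MeasureTheory

/-- Andréief's identity. -/
theorem integral_det_mul_det {ι 𝕜 α : Type*} [Fintype ι] [DecidableEq ι] [RCLike 𝕜]
    [MeasurableSpace α] (μ : Measure α) [SigmaFinite μ] (f g : ι → α → 𝕜)
    (hfg : ∀ a b, Integrable (fun t => f a t * g b t) μ) :
    ∫ x : ι → α, (of fun a i => f a (x i)).det * (of fun b i => g b (x i)).det
        ∂(Measure.pi fun _ => μ) =
      ((Fintype.card ι).factorial : 𝕜) * (of fun a b => ∫ t, f a t * g b t ∂μ).det := by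
  have expand (x : ι → α) : (of fun a i => f a (x i)).det * (of fun b i => g b (x i)).det =
      ∑ σ : Perm ι, ∑ τ : Perm ι, ((Perm.sign σ : ℤ) : 𝕜) * (Perm.sign τ : ℤ) *
        ∏ i, f (σ i) (x i) * g (τ i) (x i) := by
    rw [det_apply', det_apply', sum_mul_sum]
    refine sum_congr rfl fun σ _ => sum_congr rfl fun τ _ => ?_
    simp only [of_apply, prod_mul_distrib]
    ring
  have hterm (σ τ : Perm ι) : Integrable (fun x : ι → α => ∏ i, f (σ i) (x i) * g (τ i) (x i))
      (Measure.pi fun _ => μ) :=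
    Integrable.fintype_prod fun i => hfg (σ i) (τ i)
  simp_rw [expand]
  rw [← sum_perm_sum_perm_sign_mul_prod, integral_finsetSum _ fun σ _ =>
    integrable_finsetSum _ fun τ _ => (hterm σ τ).const_mul _]
  refine sum_congr rfl fun σ _ => ?_
  rw [integral_finsetSum _ fun τ _ => (hterm σ τ).const_mul _]
  refine sum_congr rfl fun τ _ => ?_
  rw [integral_const_mul, integral_fintype_prod_eq_prod (fun i t => f (σ i) t * g (τ i) t)]
  rfl

end MeasureTheory

namespace Complex

theorem Gamma_add_nat_eq_ascPochhammer_mul {z : ℂ} (hz : ∀ k : ℕ, z ≠ -k) (n : ℕ) :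
    Gamma (z + n) = (ascPochhammer ℂ n).eval z * Gamma z := by
  rw [← Gamma_add_nat_div_Gamma_eq z hz, div_mul_cancel₀ _ (Gamma_ne_zero hz)]

theorem det_Gamma_add_nat {n : ℕ} (z : Fin n → ℂ) (hz : ∀ b, ∀ k : ℕ, z b ≠ -k) :
    (of fun a b : Fin n => Gamma (z b + a)).det = (∏ b, Gamma (z b)) * (vandermonde z).det := by
  let P : Matrix (Fin n) (Fin n) ℂ := of fun a b => (ascPochhammer ℂ a).eval (z b)
  have hP : P.det = (vandermonde z).det := by
    rw [← det_transpose, det_eval_matrixOfPolynomials_eq_det_vandermonde z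
      (fun a => ascPochhammer ℂ a) (fun a => ascPochhammer_natDegree ℂ a)
      (fun a => monic_ascPochhammer ℂ a)]
    rfl
  have hfactor : (of fun a b : Fin n => Gamma (z b + a)) = of fun a b => Gamma (z b) * P a b := by
    ext a b
    rw [of_apply, of_apply, Gamma_add_nat_eq_ascPochhammer_mul (hz b), mul_comm]
    rfl
  rw [hfactor, det_mul_row, hP]

theorem det_Gamma_add_two_mul_add {n : ℕ} {κ : ℂ} (hκ : 0 < κ.re) :
    (of fun a b : Fin n => Gamma (κ + 2 * (b : ℕ) + a)).det =
      2 ^ n.choose 2 * (∏ i ∈ range n, (i.factorial : ℂ)) *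
        ∏ i ∈ range n, Gamma (κ + 2 * i) := by
  have hz (b : Fin n) (k : ℕ) : κ + 2 * (b : ℕ) ≠ -k := by
    intro h
    have := congrArg re h
    simp only [add_re, mul_re, re_ofNat, natCast_re, im_ofNat, natCast_im, mul_zero, sub_zero,
      neg_re] at this
    linarith
  have hvdm : (vandermonde fun b : Fin n => κ + 2 * (b : ℕ)).det =
      2 ^ n.choose 2 * ∏ i ∈ range n, (i.factorial : ℂ) := by
    simp_rw [add_comm κ, det_vandermonde_add, det_vandermonde_mul, det_vandermonde_natCast]
  rw [det_Gamma_add_nat _ hz, hvdm, Fin.prod_univ_eq_prod_range (fun i => Gamma (κ + 2 * i))]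
  ring

theorem integral_Ioi_cpow_mul_exp_neg_mul_pow {s : ℂ} (hs : 0 < s.re) (m : ℕ) :
    IntegrableOn (fun t : ℝ => (t : ℂ) ^ (s - 1) * exp (-t) * (t : ℂ) ^ m) (Set.Ioi 0) ∧
      ∫ t in Set.Ioi (0 : ℝ), (t : ℂ) ^ (s - 1) * exp (-t) * (t : ℂ) ^ m = Gamma (s + m) := by
  have hsm : 0 < (s + m).re := by simpa using add_pos_of_pos_of_nonneg hs m.cast_nonneg
  have heq : Set.EqOn (fun t : ℝ => ((Real.exp (-t) : ℝ) : ℂ) * (t : ℂ) ^ (s + m - 1))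
      (fun t : ℝ => (t : ℂ) ^ (s - 1) * exp (-t) * (t : ℂ) ^ m) (Set.Ioi 0) := by
    intro t (ht : 0 < t)
    have ht' : (t : ℂ) ≠ 0 := ofReal_ne_zero.mpr ht.ne'
    dsimp only
    rw [add_sub_right_comm, cpow_add _ _ ht', cpow_natCast, ofReal_exp, ofReal_neg]
    ring
  refine ⟨(GammaIntegral_convergent hsm).congr_fun heq measurableSet_Ioi, ?_⟩
  rw [Gamma_eq_integral hsm, GammaIntegral]
  exact (setIntegral_congr_fun measurableSet_Ioi heq).symm

theorem integral_Ioi_cpow_mul_exp_neg_mul_pow_mul_sq_pow {κ : ℂ} (hκ : 0 < κ.re) (a b : ℕ) :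
    IntegrableOn (fun t : ℝ => (t : ℂ) ^ (κ - 1) * exp (-t) * (t : ℂ) ^ a * ((t : ℂ) ^ 2) ^ b)
        (Set.Ioi 0) ∧
      ∫ t in Set.Ioi (0 : ℝ), (t : ℂ) ^ (κ - 1) * exp (-t) * (t : ℂ) ^ a * ((t : ℂ) ^ 2) ^ b =
        Gamma (κ + 2 * b + a) := by
  simp_rw [mul_assoc _ ((_ : ℂ) ^ a), ← pow_mul, ← pow_add]
  rw [show κ + 2 * b + a = κ + ((a + 2 * b : ℕ) : ℂ) by push_cast; ring]
  exact integral_Ioi_cpow_mul_exp_neg_mul_pow hκ _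

end Complex

theorem orthant_integrand_eq_det_mul_det {n : ℕ} (κ : ℂ) (y : Fin n → ℝ) :
    ((∏ i : Fin n, ∏ j ∈ Ioi i, ((y i) ^ 2 - (y j) ^ 2) : ℝ) : ℂ) *
        ((∏ i : Fin n, ∏ j ∈ Ioi i, (y i - y j) : ℝ) : ℂ) *
        (∏ i : Fin n, ((y i : ℂ) ^ (κ - 1))) * Complex.exp (-∑ i, (y i : ℂ)) =
      (of fun (a : Fin n) i =>
          (y i : ℂ) ^ (κ - 1) * Complex.exp (-y i) * (y i : ℂ) ^ (a : ℕ)).det *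
        (of fun (b : Fin n) i => ((y i : ℂ) ^ 2) ^ (b : ℕ)).det := by
  have hweighted : (of fun (a : Fin n) i =>
      (y i : ℂ) ^ (κ - 1) * Complex.exp (-y i) * (y i : ℂ) ^ (a : ℕ)).det =
      (∏ i, (y i : ℂ) ^ (κ - 1) * Complex.exp (-y i)) * (vandermonde fun i => (y i : ℂ)).det := by
    rw [← det_transpose (vandermonde _), ← det_mul_row]
    rfl
  have hsq : (of fun (b : Fin n) i => ((y i : ℂ) ^ 2) ^ (b : ℕ)).det =
      (vandermonde fun i => (y i : ℂ) ^ 2).det := by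
    rw [← det_transpose]
    rfl
  rw [hweighted, hsq, mul_assoc (∏ i, _), det_vandermonde_mul_det_vandermonde]
  simp only [prod_mul_distrib, ← Complex.exp_sum, sum_neg_distrib]
  push_cast
  ring

theorem orthant_integral_evaluated_general (n : ℕ) (κ : ℂ) (hκ : 0 < κ.re) :
    ∫ y in {y : Fin n → ℝ | ∀ i, 0 < y i},
        ((∏ i : Fin n, ∏ j ∈ Finset.Ioi i, ((y i) ^ 2 - (y j) ^ 2) : ℝ) : ℂ) *
          ((∏ i : Fin n, ∏ j ∈ Finset.Ioi i, (y i - y j) : ℝ) : ℂ) *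
          (∏ i : Fin n, ((y i : ℂ) ^ (κ - 1))) *
          Complex.exp (-∑ i, (y i : ℂ)) =
      (n.factorial : ℂ) * (2 : ℂ) ^ (n * (n - 1) / 2) *
        ∏ i ∈ Finset.range n, (Nat.factorial i : ℂ) * Complex.Gamma (κ + 2 * i) := by
  have hdomain : {y : Fin n → ℝ | ∀ i, 0 < y i} = Set.univ.pi fun _ => Set.Ioi 0 := by
    ext; simp
  have hmoment (a b : Fin n) :=
    Complex.integral_Ioi_cpow_mul_exp_neg_mul_pow_mul_sq_pow hκ a b
  rw [hdomain, volume_pi, Measure.restrict_pi_pi,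
    integral_congr_ae (Filter.Eventually.of_forall (orthant_integrand_eq_det_mul_det κ)),
    integral_det_mul_det _ _ _ fun a b => (hmoment a b).1, Fintype.card_fin]
  simp_rw [fun a b : Fin n => (hmoment a b).2]
  rw [Complex.det_Gamma_add_two_mul_add hκ, Nat.choose_two_right, prod_mul_distrib]
  ring

/-- `∫_{(0,∞)^n} D_n(y²) D_n(y) ∏ y_i^{κ-1} e^{-∑ y_i} dy
  = n! · 2^{n(n-1)/2} · ∏_{i=0}^{n-1} i! Γ(κ+2i)`. -/
theorem orthant_integral_evaluated (n : ℕ) (hn : 1 ≤ n) (κ : ℂ) (hκ : 0 < κ.re) :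
    ∫ y in {y : Fin n → ℝ | ∀ i, 0 < y i},
        ((∏ i : Fin n, ∏ j ∈ Finset.Ioi i, ((y i) ^ 2 - (y j) ^ 2) : ℝ) : ℂ) *
          ((∏ i : Fin n, ∏ j ∈ Finset.Ioi i, (y i - y j) : ℝ) : ℂ) *
          (∏ i : Fin n, ((y i : ℂ) ^ (κ - 1))) *
          Complex.exp (-∑ i, (y i : ℂ)) =
      (n.factorial : ℂ) * (2 : ℂ) ^ (n * (n - 1) / 2) *
        ∏ i ∈ Finset.range n, (Nat.factorial i : ℂ) * Complex.Gamma (κ + 2 * i) :=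
  orthant_integral_evaluated_general n κ hκ
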